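/- Evaluating the formula ν(F,W) at ℓ = 0 recovers minus the Baum–Bott count on W: −ν(F,W)|_{ℓ=0} = deg(W) · Σ_{i=0}^{n−d} τ_i^{(d)} (k−1)^{n−d−i}. Concretely, with φ_a(x) = x^{n−d−a_2}(1+x)^{d−a_1}, the only pairs (a,m) with 0 ≤ m ≤ n−d−|a| contributing a nonzero value φ_a^{(m)}(0) are a_1 = 0 and m = n−d−a_2, giving φ_a^{(m)}(0) = m!, and hence −ν(F,W)|_{ℓ=0} = deg(W) Σ_{i=0}^{n−d} τ_i^{(d)} (k−1)^{n−d−i}, where τ_i^{(d)} = Σ_{j=0}^{i} (−1)^j C(n+1, i−j) W_j^{(d)}(k_1,…,k_d). -/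

import Mathlib

open Polynomial

/-- Complete homogeneous (Wronski) symmetric function of degree `δ` in `d` variables. -/
def wronski {R : Type*} [CommSemiring R] (d δ : ℕ) (k : Fin d → R) : R :=
  ∑ a ∈ Finset.Nat.antidiagonalTuple d δ, ∏ j, k j ^ a j

/-- Elementary symmetric function of degree `i` in `d` variables. -/
def esymm {R : Type*} [CommSemiring R] (d i : ℕ) (k : Fin d → R) : R :=
  ∑ s ∈ (Finset.univ : Finset (Fin d)).powersetCard i, ∏ j ∈ s, k j

/-- `τ_i^{(d)} = ∑_{j=0}^{i} (−1)^j C(n+1, i−j) W_j^{(d)}`. -/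
def tauW {R : Type*} [CommRing R] (n d i : ℕ) (k : Fin d → R) : R :=
  ∑ j ∈ Finset.range (i + 1), (-1 : R) ^ j * ((n + 1).choose (i - j) : R) * wronski d j k

lemma iterate_derivative_X_pow_mul_one_add_X_pow_eval_zero {R : Type*} [CommSemiring R]
    (p q m : ℕ) :
    (derivative^[m] ((X : R[X]) ^ p * (1 + X) ^ q)).eval 0 =
      if p ≤ m then (m.factorial * q.choose (m - p) : R) else 0 := by
  rw [← coeff_zero_eq_eval_zero, coeff_iterate_derivative, coeff_X_pow_mul',
    coeff_one_add_X_pow, zero_add, Nat.descFactorial_self]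
  split_ifs <;> simp [nsmul_eq_mul]

lemma iterate_derivative_X_pow_mul_one_add_X_pow_eval_zero_div_factorial {K : Type*} [Field K]
    [CharZero K] (p q m : ℕ) :
    (derivative^[m] ((X : K[X]) ^ p * (1 + X) ^ q)).eval 0 / m.factorial =
      if p ≤ m then (q.choose (m - p) : K) else 0 := by
  rw [iterate_derivative_X_pow_mul_one_add_X_pow_eval_zero]
  split_ifs
  · exact mul_div_cancel_left₀ _ (Nat.cast_ne_zero.mpr m.factorial_ne_zero)
  · exact zero_div _

@[simp]
lemma esymm_zero {R : Type*} [CommSemiring R] (d : ℕ) (k : Fin d → R) : esymm d 0 k = 1 := by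
  simp [esymm]

@[simp]
lemma wronski_zero {R : Type*} [CommSemiring R] (d : ℕ) (k : Fin d → R) : wronski d 0 k = 1 := by
  simp [wronski, Finset.Nat.antidiagonalTuple_zero_right]

theorem stmt17_general (n d k : ℕ) (K : Fin d → ℝ) :
    -(-(∏ j, K j) *
        ∑ a1 ∈ Finset.range (n - d + 1), ∑ a2 ∈ Finset.range (n - d - a1 + 1),
          ∑ m ∈ Finset.range (n - d - a1 - a2 + 1),
            (-1 : ℝ) ^ (n - d - (a1 + a2) - m) *
              ((Polynomial.derivative^[m]
                  ((X : ℝ[X]) ^ (n - d - a2) * (1 + X) ^ (d - a1))).eval 0 /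
                (Nat.factorial m)) *
              ((k : ℝ) - 1) ^ m * esymm d a1 K * tauW n d a2 K *
              wronski d (n - d - (a1 + a2) - m) K) =
      (∏ j, K j) * ∑ i ∈ Finset.range (n - d + 1),
        tauW n d i K * ((k : ℝ) - 1) ^ (n - d - i) := by
  simp_rw [iterate_derivative_X_pow_mul_one_add_X_pow_eval_zero_div_factorial]
  rw [neg_mul, neg_neg, Finset.sum_eq_single_of_mem 0 (by simp)]
  · congr 1
    refine Finset.sum_congr rfl fun a2 _ => ?_
    rw [Finset.sum_range_succ, Finset.sum_eq_zero fun m hm => ?_]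
    · simp [mul_comm]
    · rw [if_neg (by simp at hm; omega)]
      simp
  · -- for `a₁ > 0`, `m ≤ n - d - a₁ - a₂` is below the order `n - d - a₂` of the zero of `φ_a` at `0`
    intro a1 ha1 ha1_ne
    refine Finset.sum_eq_zero fun a2 ha2 => Finset.sum_eq_zero fun m hm => ?_
    rw [if_neg (by simp at ha1 ha2 hm; omega)]
    simp

/-- Evaluating `ν(F,W)` at `ℓ = 0` recovers minus the Baum–Bott count on `W`:
with `φ_a(x) = x^{n−d−a₂}(1+x)^{d−a₁}` and
`ν(F,W)|₀ = −deg W ∑_{|a|≤n−d} ∑_{m=0}^{n−d−|a|} (−1)^{n−d−|a|−m} (φ_a^{(m)}(0)/m!)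
(k−1)^m σ_{a₁} τ_{a₂} W_{n−d−|a|−m}`, one has
`−ν(F,W)|₀ = deg W · ∑_{i=0}^{n−d} τ_i (k−1)^{n−d−i}`, where `deg W = k₁⋯k_d`. -/
theorem stmt17 (n d k : ℕ) (hd : 2 ≤ d) (hdn : d ≤ n) (K : Fin d → ℝ) :
    -(-(∏ j, K j) *
        ∑ a1 ∈ Finset.range (n - d + 1), ∑ a2 ∈ Finset.range (n - d - a1 + 1),
          ∑ m ∈ Finset.range (n - d - a1 - a2 + 1),
            (-1 : ℝ) ^ (n - d - (a1 + a2) - m) *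
              ((Polynomial.derivative^[m]
                  ((X : ℝ[X]) ^ (n - d - a2) * (1 + X) ^ (d - a1))).eval 0 /
                (Nat.factorial m)) *
              ((k : ℝ) - 1) ^ m * esymm d a1 K * tauW n d a2 K *
              wronski d (n - d - (a1 + a2) - m) K) =
      (∏ j, K j) * ∑ i ∈ Finset.range (n - d + 1),
        tauW n d i K * ((k : ℝ) - 1) ^ (n - d - i) :=
  stmt17_general n d k K
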